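/- arXiv:2003.08330 — 2 statements merged into one kernel-verified Lean document; each statement's English description precedes it below -/
import Mathlib

section
/- Let S̃ be the 4×4 complex matrix with nonzero entries S̃₁₄ = ω(μ₀+μ₁), S̃₂₃ = (ωε₀)⁻¹+(ωε₁)⁻¹, S̃₃₂ = ω(ε₀+ε₁), S̃₄₁ = (ωμ₀)⁻¹+(ωμ₁)⁻¹. Then the spectrum of S̃ is {±Υ_μ, ±Υ_ε} where Υ_μ = √(μ₁/μ₀) + √(μ₀/μ₁) and Υ_ε = √(ε₁/ε₀) + √(ε₀/ε₁), and all eigenvalues are real with absolute value at least 2. -/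
open Matrix

private lemma det_aux (a b c d z : ℂ) :
    ((algebraMap ℂ (Matrix (Fin 4) (Fin 4) ℂ) z) -
      !![0,0,0,a; 0,0,b,0; 0,c,0,0; d,0,0,0]).det
    = (z*z - a*d) * (z*z - b*c) := by
  simp (config := { decide := true }) [Matrix.det_succ_row_zero, Fin.sum_univ_succ,
    Matrix.algebraMap_matrix_apply, Fin.succ, Matrix.one_apply, Fin.succAbove,
    Fin.castSucc, Fin.castAdd, Fin.castLE]
  ring

private lemma sqrt_mul_one (a b : ℝ) (ha : 0 < a) (hb : 0 < b) :
    Real.sqrt (b/a) * Real.sqrt (a/b) = 1 := by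
  rw [← Real.sqrt_mul (by positivity)]
  rw [show b/a*(a/b) = 1 by field_simp]
  exact Real.sqrt_one

private lemma sq_aux (a b : ℝ) (ha : 0 < a) (hb : 0 < b) :
    (Real.sqrt (b/a) + Real.sqrt (a/b)) * (Real.sqrt (b/a) + Real.sqrt (a/b))
      = b/a + a/b + 2 := by
  have h1 : Real.sqrt (b/a) ^ 2 = b/a := Real.sq_sqrt (by positivity)
  have h2 : Real.sqrt (a/b) ^ 2 = a/b := Real.sq_sqrt (by positivity)
  have h3 := sqrt_mul_one a b ha hb
  nlinarith [h1, h2, h3]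

private lemma two_le_aux (a b : ℝ) (ha : 0 < a) (hb : 0 < b) :
    2 ≤ Real.sqrt (b/a) + Real.sqrt (a/b) := by
  have h3 := sqrt_mul_one a b ha hb
  nlinarith [sq_nonneg (Real.sqrt (b/a) - Real.sqrt (a/b)),
    Real.sqrt_nonneg (b/a), Real.sqrt_nonneg (a/b)]

private lemma prod_aux (ω a b : ℝ) (hω : 0 < ω) (ha : 0 < a) (hb : 0 < b) :
    ω * (a + b) * ((ω*a)⁻¹ + (ω*b)⁻¹)
      = (Real.sqrt (b/a) + Real.sqrt (a/b)) * (Real.sqrt (b/a) + Real.sqrt (a/b)) := by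
  rw [sq_aux a b ha hb]
  field_simp
  ring

theorem spectrum_Stilde (ω ε₀ ε₁ μ₀ μ₁ : ℝ)
    (hω : 0 < ω) (hε₀ : 0 < ε₀) (hε₁ : 0 < ε₁) (hμ₀ : 0 < μ₀) (hμ₁ : 0 < μ₁) :
    spectrum ℂ
      (!![0, 0, 0, ((ω * (μ₀ + μ₁) : ℝ) : ℂ);
          0, 0, (((ω * ε₀)⁻¹ + (ω * ε₁)⁻¹ : ℝ) : ℂ), 0;
          0, ((ω * (ε₀ + ε₁) : ℝ) : ℂ), 0, 0;
          (((ω * μ₀)⁻¹ + (ω * μ₁)⁻¹ : ℝ) : ℂ), 0, 0, 0] : Matrix (Fin 4) (Fin 4) ℂ)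
      = {((Real.sqrt (μ₁ / μ₀) + Real.sqrt (μ₀ / μ₁) : ℝ) : ℂ),
         (-(Real.sqrt (μ₁ / μ₀) + Real.sqrt (μ₀ / μ₁) : ℝ) : ℂ),
         ((Real.sqrt (ε₁ / ε₀) + Real.sqrt (ε₀ / ε₁) : ℝ) : ℂ),
         (-(Real.sqrt (ε₁ / ε₀) + Real.sqrt (ε₀ / ε₁) : ℝ) : ℂ)} ∧
    ∀ z ∈ spectrum ℂ
      (!![0, 0, 0, ((ω * (μ₀ + μ₁) : ℝ) : ℂ);
          0, 0, (((ω * ε₀)⁻¹ + (ω * ε₁)⁻¹ : ℝ) : ℂ), 0;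
          0, ((ω * (ε₀ + ε₁) : ℝ) : ℂ), 0, 0;
          (((ω * μ₀)⁻¹ + (ω * μ₁)⁻¹ : ℝ) : ℂ), 0, 0, 0] : Matrix (Fin 4) (Fin 4) ℂ),
      ∃ r : ℝ, z = (r : ℂ) ∧ 2 ≤ |r| := by
  set Υμ : ℝ := Real.sqrt (μ₁ / μ₀) + Real.sqrt (μ₀ / μ₁) with hΥμ
  set Υε : ℝ := Real.sqrt (ε₁ / ε₀) + Real.sqrt (ε₀ / ε₁) with hΥε
  have hμprod : ((ω * (μ₀ + μ₁) : ℝ) : ℂ) * (((ω * μ₀)⁻¹ + (ω * μ₁)⁻¹ : ℝ) : ℂ)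
      = (Υμ : ℂ) * (Υμ : ℂ) := by
    rw [← Complex.ofReal_mul, ← Complex.ofReal_mul, prod_aux ω μ₀ μ₁ hω hμ₀ hμ₁]
  have hεprod : (((ω * ε₀)⁻¹ + (ω * ε₁)⁻¹ : ℝ) : ℂ) * ((ω * (ε₀ + ε₁) : ℝ) : ℂ)
      = (Υε : ℂ) * (Υε : ℂ) := by
    rw [← Complex.ofReal_mul, mul_comm ((ω*ε₀)⁻¹ + (ω*ε₁)⁻¹), prod_aux ω ε₀ ε₁ hω hε₀ hε₁,
      Complex.ofReal_mul]
  have key : ∀ z : ℂ, z ∈ spectrum ℂ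
      (!![0, 0, 0, ((ω * (μ₀ + μ₁) : ℝ) : ℂ);
          0, 0, (((ω * ε₀)⁻¹ + (ω * ε₁)⁻¹ : ℝ) : ℂ), 0;
          0, ((ω * (ε₀ + ε₁) : ℝ) : ℂ), 0, 0;
          (((ω * μ₀)⁻¹ + (ω * μ₁)⁻¹ : ℝ) : ℂ), 0, 0, 0] : Matrix (Fin 4) (Fin 4) ℂ)
      ↔ z = (Υμ : ℂ) ∨ z = -(Υμ : ℂ) ∨ z = (Υε : ℂ) ∨ z = -(Υε : ℂ) := by
    intro z
    rw [spectrum.mem_iff, Matrix.isUnit_iff_isUnit_det, isUnit_iff_ne_zero, not_not,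
      det_aux, hμprod, hεprod]
    rw [show z*z - (Υμ:ℂ)*(Υμ:ℂ) = (z - Υμ)*(z + Υμ) by ring,
      show z*z - (Υε:ℂ)*(Υε:ℂ) = (z - Υε)*(z + Υε) by ring]
    simp only [mul_eq_zero, sub_eq_zero, add_eq_zero_iff_eq_neg]
    tauto
  constructor
  · ext z
    rw [key z]
    simp only [Set.mem_insert_iff, Set.mem_singleton_iff, Complex.ofReal_neg]
  · intro z hz
    rcases (key z).mp hz with h | h | h | h
    · exact ⟨Υμ, h, by rw [abs_of_nonneg (by positivity)]; exact two_le_aux μ₀ μ₁ hμ₀ hμ₁⟩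
    · exact ⟨-Υμ, by rw [h]; push_cast; ring, by
        rw [abs_neg, abs_of_nonneg (by positivity)]; exact two_le_aux μ₀ μ₁ hμ₀ hμ₁⟩
    · exact ⟨Υε, h, by rw [abs_of_nonneg (by positivity)]; exact two_le_aux ε₀ ε₁ hε₀ hε₁⟩
    · exact ⟨-Υε, by rw [h]; push_cast; ring, by
        rw [abs_neg, abs_of_nonneg (by positivity)]; exact two_le_aux ε₀ ε₁ hε₀ hε₁⟩
end

section
/- Let V⁰[n] be the 2×2 complex matrix [[0, 2i·𝔍ₙ(κ)𝔥ₙ(κ)],[-2i·𝔍ₙ'(κ)𝔥ₙ'(κ), 0]] and K⁰[n] := i(𝔍ₙ(κ)𝔥ₙ'(κ) + 𝔍ₙ'(κ)𝔥ₙ(κ))·diag(-1, 1), where 𝔍ₙ(t) = √(πt/2)·J_{n+1/2}(t) and 𝔥ₙ(t) = √(πt/2)·H⁽¹⁾_{n+1/2}(t) are Riccati–Bessel functions. Using the Wronskian identity 𝔍ₙ(t)𝔥ₙ'(t) − 𝔍ₙ'(t)𝔥ₙ(t) = i, the 4×4 matrix defined in block form by A[n] := [[K⁰[n], √(μ/ε)V⁰[n]],[√(ε/μ)V⁰[n],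 K⁰[n]]] satisfies A[n]² = Id₄. -/
open Matrix Complex in
theorem Calderon_identity_sphere (ε μ : ℝ) (hε : 0 < ε) (hμ : 0 < μ)
    (a a' b b' : ℂ) (hW : a * b' - a' * b = Complex.I) :
    let V : Matrix (Fin 2) (Fin 2) ℂ :=
      !![0, 2 * Complex.I * a * b; -(2 * Complex.I * a' * b'), 0]
    let K : Matrix (Fin 2) (Fin 2) ℂ :=
      !![-(Complex.I * (a * b' + a' * b)), 0; 0, Complex.I * (a * b' + a' * b)]
    let A : Matrix (Fin 2 ⊕ Fin 2) (Fin 2 ⊕ Fin 2) ℂ :=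
      fromBlocks K (((Real.sqrt (μ / ε) : ℝ) : ℂ) • V)
                 (((Real.sqrt (ε / μ) : ℝ) : ℂ) • V) K
    A * A = 1 := by
  intro V K A
  set s : ℂ := ((Real.sqrt (μ / ε) : ℝ) : ℂ) with hs_def
  set t : ℂ := ((Real.sqrt (ε / μ) : ℝ) : ℂ) with ht_def
  have hs : s * t = 1 := by
    rw [hs_def, ht_def, ← Complex.ofReal_mul, ← Real.sqrt_mul (by positivity)]
    have : μ / ε * (ε / μ) = 1 := by field_simp
    rw [this, Real.sqrt_one, Complex.ofReal_one]
  have ht : t * s = 1 := by rw [mul_comm]; exact hs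
  have hVV : ∀ c d : ℂ, c * d = 1 → (c • V) * (d • V) = V * V := by
    intro c d h
    rw [Matrix.smul_mul, Matrix.mul_smul, smul_smul, h, one_smul]
  have hKV : K * V + V * K = 0 := by
    ext i j
    fin_cases i <;> fin_cases j <;>
      simp [V, K, Matrix.mul_apply, Fin.sum_univ_succ] <;> ring
  have hKK : K * K + V * V = 1 := by
    ext i j
    fin_cases i <;> fin_cases j <;>
      simp [V, K, Matrix.mul_apply, Fin.sum_univ_succ, Matrix.one_apply] <;>
      linear_combination (Complex.I^2 * (a*b' - a'*b + Complex.I)) * hW +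
        (Complex.I^2 - 1) * Complex.I_sq
  have hsm : ∀ c : ℂ, K * (c • V) + (c • V) * K = 0 := by
    intro c
    rw [Matrix.mul_smul, Matrix.smul_mul, ← smul_add, hKV, smul_zero]
  show fromBlocks K (s • V) (t • V) K * fromBlocks K (s • V) (t • V) K = 1
  have hKK' : V * V + K * K = 1 := by rw [add_comm]; exact hKK
  have hsm' : ∀ c : ℂ, (c • V) * K + K * (c • V) = 0 := by
    intro c; rw [add_comm]; exact hsm c
  rw [Matrix.fromBlocks_multiply, hVV s t hs, hVV t s ht, hKK, hKK', hsm s, hsm' t,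
    ← Matrix.fromBlocks_one]
end
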